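/- Let h be analytic on a neighborhood of the closed unit disk, m ≥ 2 an integer, g analytic with g'(z) = z^{m-1} h'(z), and φ(t) = h(e^{it}) + conj(g(e^{it})). At every t where φ'(t) ≠ 0, one has Im(φ''(t)/φ'(t)) ≤ 0. -/

import Mathlib

/-!
Put `z = e^{it}`, `A = z h'(z)`, `C = z h'(z) + z² h''(z)` and `w = z^(m-1)`, so `|w| = 1`.
Differentiating twice, and using `g' = z^(m-1) h'`, gives `φ' = i (A - conj (w A))` and
`φ'' = i (i C + i conj (w (C + (m-1) A)))`, hence
`φ''/φ' = i (C + conj (w C) + (m-1) conj (w A)) / (A - conj (w A))`.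
Conjugation multiplies `C + conj (w C)` by `w` and `A - conj (w A)` by `-w`, so their quotient is
purely imaginary; and `|A| = |conj (w A)|` forces `Re (conj (w A) / (A - conj (w A))) = -1/2`.
So in fact `Im (φ''/φ') = -(m-1)/2`.
-/

open Complex Metric ComplexConjugate

lemma re_eq_zero_of_conj_eq_neg {z : ℂ} (hz : conj z = -z) : z.re = 0 := by
  have := congrArg re hz
  rw [conj_re, neg_re] at this
  linarith

lemma re_div_eq_zero_of_conj {x y w : ℂ} (hw : w ≠ 0) (hx : conj x = w * x)
    (hy : conj y = -(w * y)) : (x / y).re = 0 := by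
  refine re_eq_zero_of_conj_eq_neg ?_
  rw [map_div₀, hx, hy, div_neg, mul_div_mul_left _ _ hw]

lemma re_div_sub_of_norm_eq {u v : ℂ} (huv : ‖u‖ = ‖v‖) (hne : u ≠ v) :
    (v / (u - v)).re = -1 / 2 := by
  have hsq : normSq u = normSq v := by rw [normSq_eq_norm_sq, normSq_eq_norm_sq, huv]
  have hpos : 0 < normSq (u - v) := normSq_pos.mpr (sub_ne_zero.mpr hne)
  rw [div_re, ← add_div, div_eq_iff hpos.ne']
  simp only [normSq_apply, sub_re, sub_im] at hsq ⊢
  linear_combination (1/2 : ℝ) * hsq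

lemma re_div_of_norm_eq_one {w : ℂ} (hw : ‖w‖ = 1) (A C : ℂ) (K : ℝ)
    (hA : A ≠ conj (w * A)) :
    ((C + conj (w * (C + K * A))) / (A - conj (w * A))).re = -K / 2 := by
  have hw0 : w ≠ 0 := norm_ne_zero_iff.mp (by rw [hw]; exact one_ne_zero)
  have hwc : w * conj w = 1 := by
    rw [mul_conj, normSq_eq_norm_sq, hw]; simp
  have hsplit : (C + conj (w * (C + K * A))) / (A - conj (w * A)) =
      (C + conj (w * C)) / (A - conj (w * A)) + K * (conj (w * A) / (A - conj (w * A))) := by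
    simp only [mul_add, map_add, map_mul, conj_ofReal]
    ring
  have hsym : ((C + conj (w * C)) / (A - conj (w * A))).re = 0 := by
    refine re_div_eq_zero_of_conj hw0 ?_ ?_
    · simp only [map_add, map_mul, conj_conj]
      linear_combination (-conj C) * hwc
    · simp only [map_sub, map_mul, conj_conj]
      linear_combination (-conj A) * hwc
  have hnorm : ‖A‖ = ‖conj (w * A)‖ := by rw [norm_conj, norm_mul, hw, one_mul]
  rw [hsplit, add_re, hsym, re_ofReal_mul, re_div_sub_of_norm_eq hnorm hA]
  ring

lemma hasDerivAt_exp_I_mul (t : ℝ) :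
    HasDerivAt (fun s : ℝ => cexp (I * s)) (I * cexp (I * t)) t := by
  have h := ((hasDerivAt_id (t : ℂ)).const_mul I).cexp.comp_ofReal
  simpa [mul_comm] using h

lemma exp_I_mul_mem_closedBall (t : ℝ) : cexp (I * t) ∈ closedBall (0 : ℂ) 1 := by
  simp [norm_exp_I_mul_ofReal]

lemma HasDerivAt.comp_exp_I_mul {F : ℂ → ℂ} {F' : ℂ} {t : ℝ}
    (hF : HasDerivAt F F' (cexp (I * t))) :
    HasDerivAt (fun s : ℝ => F (cexp (I * s))) (I * cexp (I * t) * F') t :=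
  (hF.comp t (hasDerivAt_exp_I_mul t)).congr_deriv (mul_comm _ _)

lemma hasDerivAt_exp_I_mul_pow (n : ℕ) (t : ℝ) :
    HasDerivAt (fun s : ℝ => cexp (I * s) ^ n) (I * n * cexp (I * t) ^ n) t := by
  refine ((hasDerivAt_pow n _).comp_exp_I_mul).congr_deriv ?_
  rcases n with _ | n
  · simp
  · simp only [Nat.add_sub_cancel, pow_succ]
    ring

lemma hasDerivAt_exp_I_mul_mul_deriv {F : ℂ → ℂ} {t : ℝ}
    (hF : DifferentiableAt ℂ (deriv F) (cexp (I * t))) :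
    HasDerivAt (fun s : ℝ => cexp (I * s) * deriv F (cexp (I * s)))
      (I * (cexp (I * t) * deriv F (cexp (I * t)) +
        cexp (I * t) ^ 2 * deriv (deriv F) (cexp (I * t)))) t := by
  refine ((hasDerivAt_exp_I_mul t).mul hF.hasDerivAt.comp_exp_I_mul).congr_deriv ?_
  ring

section BoundaryCurve

variable {h g : ℂ → ℂ} {m : ℕ} {φ : ℝ → ℂ}
  (hh : AnalyticOnNhd ℂ h (closedBall 0 1)) (hg : AnalyticOnNhd ℂ g (closedBall 0 1))
  (hg' : ∀ z : ℂ, z ∈ closedBall (0 : ℂ) 1 → deriv g z = z ^ (m - 1) * deriv h z)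
  (hφ : ∀ t : ℝ, φ t = h (cexp (I * t)) + conj (g (cexp (I * t))))
include hh hg hg' hφ

lemma deriv_boundaryCurve :
    deriv φ = fun s : ℝ => I * (cexp (I * s) * deriv h (cexp (I * s)) -
      conj (cexp (I * s) ^ (m - 1) * (cexp (I * s) * deriv h (cexp (I * s))))) := by
  funext s
  have hz := exp_I_mul_mem_closedBall s
  have hH := HasDerivAt.comp_exp_I_mul (hh _ hz).differentiableAt.hasDerivAt
  have hG := (HasDerivAt.comp_exp_I_mul (hg _ hz).differentiableAt.hasDerivAt).star
  rw [((hH.add hG).congr_of_eventuallyEq (.of_forall hφ)).deriv, hg' _ hz]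
  simp only [star_def, map_mul, conj_I]
  ring

end BoundaryCurve

theorem stmt_3_general (h g : ℂ → ℂ) (m : ℕ)
    (hh : AnalyticOnNhd ℂ h (closedBall 0 1))
    (hg : AnalyticOnNhd ℂ g (closedBall 0 1))
    (hg' : ∀ z : ℂ, z ∈ closedBall (0 : ℂ) 1 → deriv g z = z ^ (m - 1) * deriv h z)
    (φ : ℝ → ℂ)
    (hφ : ∀ t : ℝ, φ t = h (Complex.exp (Complex.I * t)) +
      (starRingEnd ℂ) (g (Complex.exp (Complex.I * t))))
    (t : ℝ) (hne : deriv φ t ≠ 0) :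
    (deriv (deriv φ) t / deriv φ t).im ≤ 0 := by
  have hφ' := deriv_boundaryCurve hh hg hg' hφ
  have hz := exp_I_mul_mem_closedBall t
  have hA := hasDerivAt_exp_I_mul_mul_deriv (hh.deriv _ hz).differentiableAt
  have hw := hasDerivAt_exp_I_mul_pow (m - 1) t
  have hφt := congrFun hφ' t
  set z := cexp (I * t)
  set A := z * deriv h z
  set C := z * deriv h z + z ^ 2 * deriv (deriv h) z
  set w := z ^ (m - 1)
  have hφ'' : deriv (deriv φ) t = I * (I * C + I * conj (w * (C + ((m - 1 : ℕ) : ℝ) * A))) := by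
    rw [hφ']
    refine ((hA.sub (hw.mul hA).star).const_mul I).deriv.trans ?_
    simp only [A, w, star_def, map_mul, map_add, conj_I, map_natCast, ofReal_natCast]
    ring
  have hAw : A ≠ conj (w * A) := by
    rw [hφt] at hne
    exact sub_ne_zero.mp (right_ne_zero_of_mul hne)
  have hnorm : ‖w‖ = 1 := by rw [norm_pow, norm_exp_I_mul_ofReal, one_pow]
  calc (deriv (deriv φ) t / deriv φ t).im
      = (I * ((C + conj (w * (C + ((m - 1 : ℕ) : ℝ) * A))) / (A - conj (w * A)))).im := by
        rw [hφ'', hφt, ← mul_add, mul_div_mul_left _ _ I_ne_zero, mul_div_assoc]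
    _ = -((m - 1 : ℕ) : ℝ) / 2 := by rw [I_mul_im, re_div_of_norm_eq_one hnorm _ _ _ hAw]
    _ ≤ 0 := div_nonpos_of_nonpos_of_nonneg (neg_nonpos.mpr (Nat.cast_nonneg _)) zero_le_two

/-- at every t where φ'(t) ≠ 0, Im(φ''(t)/φ'(t)) ≤ 0. -/
theorem stmt_3 (h g : ℂ → ℂ) (m : ℕ) (hm : 2 ≤ m)
    (hh : AnalyticOnNhd ℂ h (closedBall 0 1))
    (hg : AnalyticOnNhd ℂ g (closedBall 0 1))
    (hg' : ∀ z : ℂ, z ∈ closedBall (0 : ℂ) 1 → deriv g z = z ^ (m - 1) * deriv h z)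
    (φ : ℝ → ℂ)
    (hφ : ∀ t : ℝ, φ t = h (Complex.exp (Complex.I * t)) +
      (starRingEnd ℂ) (g (Complex.exp (Complex.I * t))))
    (t : ℝ) (hne : deriv φ t ≠ 0) :
    (deriv (deriv φ) t / deriv φ t).im ≤ 0 :=
  stmt_3_general h g m hh hg hg' φ hφ t hne
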